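/- Let p : D ⥤ B be a discrete fibration between small categories, let F, G : B' ⥤ B be functors from a small category B', and let σ : F ⟶ G be a natural transformation. Suppose given strict pullback squares in Cat exhibiting D'₁ (with projection p₁ : D'₁ ⥤ B' and top functor F̄ : D'₁ ⥤ D, satisfying F̄ ⋙ p = p₁ ⋙ F) as the pullback of p along F, and D'₂ (with projection p₂ : D'₂ ⥤ B' and top functor Ḡ : D'₂ ⥤ D, satisfying Ḡ ⋙ p = p₂ ⋙ G) as the pullback of p along G. Then there exists a unique pair (σ*, σ̄) consisting of a functor σ* : D'₂ ⥤ D'₁ with p₁ ∘ σ* = p₂ and a natural transformation σ̄ : σ* ⋙ F̄ ⟶ Ḡ such that for every object x of D'₂ the morphism p(σ̄ₓ) equals the component σ at p₂(x) (under the strict identifications p((σ* ⋙ F̄)(x)) = F(p₂(x)) and p(Ḡ(x)) = G(p₂(x)) provided by the commuting pullback squares). -/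

import Mathlib

/-!
Whiskering with a discrete fibration `p` is again a discrete fibration of functor categories.
Hence `whiskerLeft p₂ σ`, read as a morphism `p₂ ⋙ F ⟶ Ḡ ⋙ p`, has a unique lift
`τ : L ⟶ Ḡ` with `L ⋙ p = p₂ ⋙ F`. The pullback property of `D₁` turns `L` into the unique
functor `σ* : D₂ ⥤ D₁` over `B'` with `σ* ⋙ F̄ = L`, and `σ̄` is `τ`.
-/

open CategoryTheory

universe u

/-- A functor `p : E ⥤ B` is a discrete fibration if for every object `e` of `E` and every
morphism `f : b ⟶ p.obj e` in `B` there is a unique pair `(e', g : e' ⟶ e)` with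
`p.obj e' = b` and `p.map g = f` (up to the identification `p.obj e' = b`). -/
def IsDiscreteFibration {E B : Type*} [Category E] [Category B] (p : E ⥤ B) : Prop :=
  ∀ {e : E} {b : B} (f : b ⟶ p.obj e),
    ∃! eg : Σ e' : E, e' ⟶ e,
      ∃ h : p.obj eg.1 = b, p.map eg.2 = eqToHom h ≫ f

open Functor

namespace IsDiscreteFibration

variable {E B : Type*} [Category E] [Category B] {p : E ⥤ B}

theorem obj_eq_of_map_eq (hp : IsDiscreteFibration p) {e₁ e₂ e : E} (g₁ : e₁ ⟶ e)
    (g₂ : e₂ ⟶ e) (h : p.obj e₁ = p.obj e₂) (hg : p.map g₁ = eqToHom h ≫ p.map g₂) :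
    e₁ = e₂ :=
  congrArg Sigma.fst <|
    (hp (p.map g₂)).unique (y₁ := ⟨e₁, g₁⟩) (y₂ := ⟨e₂, g₂⟩) ⟨h, hg⟩ ⟨rfl, by simp⟩

theorem faithful (hp : IsDiscreteFibration p) : p.Faithful where
  map_injective {e' _} g₁ g₂ hg :=
    eq_of_heq (Sigma.mk.inj_iff.mp <| (hp (p.map g₂)).unique (y₁ := ⟨e', g₁⟩) (y₂ := ⟨e', g₂⟩)
      ⟨rfl, by simpa using hg⟩ ⟨rfl, by simp⟩).2

theorem of_faithful [p.Faithful]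
    (exists_lift : ∀ {e : E} {b : B} (f : b ⟶ p.obj e),
      ∃ (e' : E) (g : e' ⟶ e) (h : p.obj e' = b), p.map g = eqToHom h ≫ f)
    (obj_eq : ∀ {e₁ e₂ e : E} (g₁ : e₁ ⟶ e) (g₂ : e₂ ⟶ e) (h : p.obj e₁ = p.obj e₂),
      p.map g₁ = eqToHom h ≫ p.map g₂ → e₁ = e₂) :
    IsDiscreteFibration p := by
  intro e b f
  obtain ⟨e', g, h, hg⟩ := exists_lift f
  refine ⟨⟨e', g⟩, ⟨h, hg⟩, ?_⟩
  rintro ⟨e'', g'⟩ ⟨h', hg'⟩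
  obtain rfl := obj_eq g' g (h'.trans h.symm) (by simp [hg, hg'])
  exact congrArg (Sigma.mk e'') (p.map_injective (hg'.trans hg.symm))

/-- Every morphism is cartesian for a discrete fibration. -/
theorem exists_map_eq_comp_eq (hp : IsDiscreteFibration p) {e₁ e₂ e : E} (u : e₂ ⟶ e)
    (g : e₁ ⟶ e) (β : p.obj e₁ ⟶ p.obj e₂) (hβ : β ≫ p.map u = p.map g) :
    ∃ v : e₁ ⟶ e₂, p.map v = β ∧ v ≫ u = g := by
  have := hp.faithful
  obtain ⟨⟨e', v⟩, h, hv⟩ := (hp β).exists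
  obtain rfl : e' = e₁ := hp.obj_eq_of_map_eq (v ≫ u) g h (by simp [hv, hβ])
  have hv' : p.map v = β := by simpa using hv
  exact ⟨v, hv', p.map_injective (by simp [hv', hβ])⟩

theorem exists_lift_natTrans (hp : IsDiscreteFibration p) {X : Type*} [Category X]
    {K : X ⥤ E} {H : X ⥤ B} (α : H ⟶ K ⋙ p) :
    ∃ (K' : X ⥤ E) (τ : K' ⟶ K) (h : K' ⋙ p = H), whiskerRight τ p = eqToHom h ≫ α := by
  have := hp.faithful
  choose e hobj hτ using fun x => (hp (α.app x)).exists
  have hβ {x y : X} (f : x ⟶ y) : (eqToHom (hobj x) ≫ H.map f ≫ eqToHom (hobj y).symm) ≫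
      p.map (e y).2 = p.map ((e x).2 ≫ K.map f) := by
    simp [hτ, α.naturality f]
  choose v hv hvu using fun x y (f : x ⟶ y) =>
    hp.exists_map_eq_comp_eq (e y).2 ((e x).2 ≫ K.map f) _ (hβ f)
  -- `Faithful.div` derives the functor laws from faithfulness of `p`
  let K' : X ⥤ E := Faithful.div H p (fun x => (e x).1) hobj (fun {x y} f => v x y f)
    (fun {x y f} => (conj_eqToHom_iff_heq _ _ (hobj x) (hobj y)).mp (hv x y f))
  refine ⟨K', { app x := (e x).2, naturality := hvu }, CategoryTheory.Functor.ext hobj hv, ?_⟩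
  ext x
  rw [NatTrans.comp_app, eqToHom_app]
  exact hτ x

theorem whiskeringRight_obj (hp : IsDiscreteFibration p) (X : Type*) [Category X] :
    IsDiscreteFibration ((whiskeringRight X E B).obj p) := by
  have := hp.faithful
  apply of_faithful (fun α => hp.exists_lift_natTrans α)
  intro K₁ K₂ _ τ₁ τ₂ h hτ
  have hobj (x : X) : K₁.obj x = K₂.obj x :=
    hp.obj_eq_of_map_eq (τ₁.app x) (τ₂.app x) (Functor.congr_obj h x)
      (by simpa using NatTrans.congr_app hτ x)
  exact CategoryTheory.Functor.ext hobj fun x y f =>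
    p.map_injective (by simpa [eqToHom_map] using Functor.congr_hom h f)

end IsDiscreteFibration

theorem existsUnique_functor_of_isPullback {P X Y Z W : Type u} [SmallCategory P]
    [SmallCategory X] [SmallCategory Y] [SmallCategory Z] [SmallCategory W]
    {fst : P ⥤ X} {snd : P ⥤ Y} {f : X ⥤ Z} {g : Y ⥤ Z}
    (hP : IsPullback (C := Cat.{u, u}) fst.toCatHom snd.toCatHom f.toCatHom g.toCatHom)
    (h : W ⥤ X) (k : W ⥤ Y) (w : h ⋙ f = k ⋙ g) :
    ∃! l : W ⥤ P, l ⋙ fst = h ∧ l ⋙ snd = k := by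
  obtain ⟨l₀, hl₀fst, hl₀snd⟩ := hP.exists_lift h.toCatHom k.toCatHom (congrArg toCatHom w)
  refine ⟨l₀.toFunctor, ⟨congrArg Cat.Hom.toFunctor hl₀fst, congrArg Cat.Hom.toFunctor hl₀snd⟩,
    fun l hl => congrArg Cat.Hom.toFunctor (hP.hom_ext (k := l.toCatHom) ?_ ?_)⟩
  · exact (congrArg toCatHom hl.1).trans hl₀fst.symm
  · exact (congrArg toCatHom hl.2).trans hl₀snd.symm

/-- Given a discrete fibration `p : D ⥤ B`, a natural transformation `σ : F ⟶ G` between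
functors `B' ⥤ B`, and pullback squares in `Cat` exhibiting `D₁` and `D₂` as the base
changes of `p` along `F` and `G` respectively, there is a unique pair `(σ*, σ̄)` of a
functor `σ* : D₂ ⥤ D₁` over `B'` and a natural transformation `σ̄ : σ* ⋙ F̄ ⟶ Ḡ`
lying over `σ`. -/
theorem base_change_of_natural_transformation
    {B B' D D₁ D₂ : Type u} [SmallCategory B] [SmallCategory B']
    [SmallCategory D] [SmallCategory D₁] [SmallCategory D₂]
    (p : D ⥤ B) (hp : IsDiscreteFibration p)
    (F G : B' ⥤ B) (σ : F ⟶ G)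
    (p₁ : D₁ ⥤ B') (Fbar : D₁ ⥤ D) (hcomm₁ : Fbar ⋙ p = p₁ ⋙ F)
    (hpb₁ : IsPullback (C := Cat.{u, u})
      (show Cat.of D₁ ⟶ Cat.of D from Fbar.toCatHom)
      (show Cat.of D₁ ⟶ Cat.of B' from p₁.toCatHom)
      (show Cat.of D ⟶ Cat.of B from p.toCatHom)
      (show Cat.of B' ⟶ Cat.of B from F.toCatHom))
    (p₂ : D₂ ⥤ B') (Gbar : D₂ ⥤ D) (hcomm₂ : Gbar ⋙ p = p₂ ⋙ G) :
    ∃! q : Σ' (σs : D₂ ⥤ D₁), (σs ⋙ Fbar ⟶ Gbar),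
      ∃ h : q.1 ⋙ p₁ = p₂,
        ∀ x : D₂, p.map (q.2.app x) =
          eqToHom (show p.obj ((q.1 ⋙ Fbar).obj x) = F.obj (p₂.obj x) by
            have h1 := Functor.congr_obj hcomm₁ (q.1.obj x)
            have h2 := Functor.congr_obj h x
            simp only [Functor.comp_obj] at h1 h2 ⊢
            rw [h1, h2]) ≫
          σ.app (p₂.obj x) ≫
          eqToHom (Functor.congr_obj hcomm₂ x).symm := by
  have := hp.faithful
  let α : p₂ ⋙ F ⟶ Gbar ⋙ p := whiskerLeft p₂ σ ≫ eqToHom hcomm₂.symm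
  obtain ⟨⟨L, τ⟩, ⟨hL, hτ⟩, hτ_unique⟩ := hp.whiskeringRight_obj D₂ α
  obtain ⟨σs, ⟨hFbar, hp₁⟩, hσs_unique⟩ := existsUnique_functor_of_isPullback hpb₁ L p₂ hL
  have hτ_app (x : D₂) :
      p.map (τ.app x) = eqToHom (Functor.congr_obj hL x) ≫ σ.app (p₂.obj x) ≫
        eqToHom (Functor.congr_obj hcomm₂ x).symm := by
    simpa [α] using NatTrans.congr_app hτ x
  refine ⟨⟨σs, eqToHom hFbar ≫ τ⟩, ⟨hp₁, fun x => by simp [hτ_app, eqToHom_map]⟩, ?_⟩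
  rintro ⟨σs', τ'⟩ ⟨hp₁', hτ'⟩
  have hL' : σs' ⋙ Fbar = L := by
    refine congrArg Sigma.fst (hτ_unique ⟨σs' ⋙ Fbar, τ'⟩ ⟨?_, ?_⟩)
    · show (σs' ⋙ Fbar) ⋙ p = p₂ ⋙ F
      rw [Functor.assoc, hcomm₁, ← Functor.assoc, hp₁']
    · ext x
      simpa [α] using hτ' x
  obtain rfl : σs' = σs := hσs_unique σs' ⟨hL', hp₁'⟩
  congr 1
  ext x
  apply p.map_injective
  simp [hτ' x, hτ_app, eqToHom_map]
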